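/- arXiv:math/9407205 — 2 statements merged into one kernel-verified Lean document; each statement's English description precedes it below -/
import Mathlib

section
/- For every m ≥ 1 and every function f : (2^ω)^m → 2^ω whose graph is coanalytic (i.e., the complement of the graph {(a, y) : y = f(a)} in (2^ω)^m × 2^ω is an analytic set), there exists a nonempty perfect set P ⊆ 2^ω that is free for f. -/
/-!
Analytic sets have the Baire property: along a Souslin scheme `A s = g '' [s]`, the Baire hull of
each piece exceeds the union of the hulls of its children only by a meagre set, and a point outside
these countably many meagre sets follows a branch whose hulls shrink to a point of `range g`.
Hence, for every pattern `σ : Fin m → Fin m`, the graph of `a ↦ f (a ∘ σ)` is Baire measurable;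
its vertical sections are singletons, so it is meagre by the Kuratowski–Ulam theorem.
Mycielski's theorem gives a Cantor set `P` none of whose injective `(m + 1)`-tuples lies on one of
these graphs (reading the last entry as the value). If `a ∈ Pᵐ` had `f a ∈ P` different from every
`a i`, write `a = w ∘ σ` with `w` injective, padding the distinct entries of `a` with points of `P`
other than `f a`; then `(w, f a)` would be such a tuple.
-/

open Set Filter Topology MeasureTheory Function PiNat TopologicalSpace

namespace PiNat

lemma exists_cylinder_subset {E : ℕ → Type*} [∀ n, TopologicalSpace (E n)]
    [∀ n, DiscreteTopology (E n)] {x : ∀ n, E n} {U : Set (∀ n, E n)} (hU : U ∈ 𝓝 x) :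
    ∃ n, cylinder x n ⊆ U := by
  obtain ⟨_, ⟨y, n, rfl⟩, hx, hyU⟩ := (isTopologicalBasis_cylinders E).mem_nhds_iff.1 hU
  exact ⟨n, mem_cylinder_iff_eq.1 hx ▸ hyU⟩

lemma exists_forall_res {α : Type*} {P : List α → Prop} (h0 : P [])
    (hstep : ∀ l, P l → ∃ a, P (a :: l)) : ∃ y : ℕ → α, ∀ n, P (res y n) := by
  choose next hnext using hstep
  let branch : ℕ → {l // P l} := fun n => n.rec ⟨[], h0⟩ fun _ l => ⟨_, hnext l.1 l.2⟩
  refine ⟨fun n => next (branch n).1 (branch n).2, fun n => ?_⟩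
  suffices res _ n = (branch n).1 from this ▸ (branch n).2
  induction n with
  | zero => rfl
  | succ n ih => rw [res_succ, ih]

lemma eventually_injective_res {ι α : Type*} [Finite ι] {x : ι → ℕ → α}
    (hx : Injective x) : ∀ᶠ n in atTop, Injective fun i => res (x i) n := by
  have : ∀ i j, ∀ᶠ n in atTop, res (x i) n = res (x j) n → i = j := by
    intro i j
    by_cases hij : i = j
    · exact .of_forall fun _ _ => hij
    obtain ⟨k, hk⟩ := Function.ne_iff.1 (hx.ne hij)
    filter_upwards [eventually_gt_atTop k] with n hn h using absurd (res_eq_res.1 h hn) hk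
  filter_upwards [eventually_all.2 fun i => eventually_all.2 (this i)] with n hn i j using hn i j

instance perfectSpace {α : Type*} [TopologicalSpace α] [DiscreteTopology α] [Nontrivial α] :
    PerfectSpace (ℕ → α) := by
  refine ⟨preperfect_iff_nhds.2 fun x _ U hU => ?_⟩
  obtain ⟨n, hn⟩ := exists_cylinder_subset hU
  obtain ⟨a, ha⟩ := exists_ne (x n)
  exact ⟨update x n a, ⟨hn (update_mem_cylinder x n a), trivial⟩,
    fun h => ha (by simpa using congrFun h n)⟩

end PiNat

section Meagre

variable {X : Type*} [TopologicalSpace X]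

lemma Filter.EventuallyEq.isMeagre_diff {s t : Set X} (h : s =ᶠ[residual X] t) :
    IsMeagre (s \ t) :=
  h.mono fun _ hx hst => hst.2 (hx.mp hst.1)

lemma IsClosed.baireMeasurableSet {s : Set X} (hs : IsClosed s) : BaireMeasurableSet s :=
  hs.isOpen_compl.baireMeasurableSet.of_compl

lemma isMeagre_singleton [T1Space X] [PerfectSpace X] (x : X) : IsMeagre {x} :=
  (isClosed_singleton.isNowhereDense_iff.2 (interior_singleton x)).isMeagre

lemma IsMeagre.exists_monotone_isClosed_cover {s : Set X} (hs : IsMeagre s) :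
    ∃ F : ℕ → Set X, (∀ n, IsClosed (F n) ∧ IsMeagre (F n)) ∧ Monotone F ∧ s ⊆ ⋃ n, F n := by
  obtain ⟨S, hS, hSc, hsS⟩ := isMeagre_iff_countable_union_isNowhereDense.1 hs
  obtain ⟨t, ht⟩ := (hSc.insert ∅).exists_eq_range (insert_nonempty _ _)
  have htS : ∀ k, IsNowhereDense (t k) := fun k =>
    (ht ▸ mem_range_self k : t k ∈ insert ∅ S).elim (· ▸ isNowhereDense_empty) (hS _)
  refine ⟨accumulate (closure ∘ t), fun n => ⟨(finite_le_nat n).isClosed_biUnion fun k _ =>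
    isClosed_closure, isMeagre_iUnion fun k => isMeagre_iUnion fun _ => (htS k).closure.isMeagre⟩,
    monotone_accumulate, ?_⟩
  rw [iUnion_accumulate]
  refine hsS.trans (sUnion_subset fun u hu => ?_)
  obtain ⟨k, hk⟩ : u ∈ range t := ht ▸ mem_insert_of_mem _ hu
  exact hk ▸ subset_closure.trans (subset_iUnion (closure ∘ t) k)

end Meagre

section BaireHull

variable {X : Type*} [TopologicalSpace X]

def nonMeagrePoints (s : Set X) : Set X := {x | ∀ U ∈ 𝓝 x, ¬IsMeagre (U ∩ s)}

/-- A Baire-measurable envelope of `s`: every Baire-measurable subset of `baireHull s \ s` is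
meagre (`isMeagre_of_subset_baireHull`). -/
def baireHull (s : Set X) : Set X := s ∪ nonMeagrePoints s

lemma isClosed_nonMeagrePoints (s : Set X) : IsClosed (nonMeagrePoints s) := by
  refine isOpen_compl_iff.1 (isOpen_iff_mem_nhds.2 fun x hx => ?_)
  simp only [nonMeagrePoints, mem_compl_iff, mem_ofPred_eq, not_forall, not_not] at hx
  obtain ⟨U, hU, hUs⟩ := hx
  filter_upwards [eventually_mem_nhds_iff.2 hU] with y hy hys using hys U hy hUs

lemma isMeagre_diff_nonMeagrePoints [SecondCountableTopology X] (s : Set X) :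
    IsMeagre (s \ nonMeagrePoints s) := by
  set B := {U ∈ countableBasis X | IsMeagre (U ∩ s)}
  have : Countable B := ((countable_countableBasis X).mono (sep_subset _ _)).to_subtype
  refine (isMeagre_iUnion fun U : B => U.2.2).mono fun x ⟨hxs, hx⟩ => ?_
  simp only [nonMeagrePoints, mem_ofPred_eq, not_forall, not_not] at hx
  obtain ⟨U, hU, hUs⟩ := hx
  obtain ⟨V, hVB, hxV, hVU⟩ := (isBasis_countableBasis X).mem_nhds_iff.1 hU
  exact mem_iUnion.2 ⟨⟨V, hVB, hUs.mono (inter_subset_inter_left _ hVU)⟩, hxV, hxs⟩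

lemma nonMeagrePoints_subset_closure (s : Set X) : nonMeagrePoints s ⊆ closure s := by
  intro x hx
  by_contra hxs
  refine hx _ (isClosed_closure.isOpen_compl.mem_nhds hxs) ?_
  rw [(disjoint_compl_left.mono_right subset_closure).inter_eq]
  exact IsMeagre.empty

lemma subset_baireHull (s : Set X) : s ⊆ baireHull s := subset_union_left

lemma baireHull_subset_closure (s : Set X) : baireHull s ⊆ closure s :=
  union_subset subset_closure (nonMeagrePoints_subset_closure s)

lemma baireMeasurableSet_baireHull [SecondCountableTopology X] (s : Set X) :
    BaireMeasurableSet (baireHull s) := by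
  rw [baireHull, union_comm, ← union_sdiff_self]
  exact (isClosed_nonMeagrePoints s).baireMeasurableSet.union
    (isMeagre_diff_nonMeagrePoints s).baireMeasurableSet

/-- `Z` agrees with an open set `U` up to a meagre set; a point of `Z ∩ U` would be a point near
which `s ⊆ U \ Z` is not meagre. -/
lemma isMeagre_of_subset_baireHull {s Z : Set X} (hZ : BaireMeasurableSet Z)
    (hZs : Z ⊆ baireHull s) (hdisj : Disjoint Z s) : IsMeagre Z := by
  obtain ⟨U, hU, hZU⟩ := hZ.residualEq_isOpen
  have hUZ : Disjoint Z U := by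
    refine disjoint_left.2 fun x hxZ hxU => ?_
    have hx : x ∈ nonMeagrePoints s := (hZs hxZ).resolve_left (disjoint_left.1 hdisj hxZ)
    exact hx U (hU.mem_nhds hxU) (hZU.symm.isMeagre_diff.mono
      (inter_subset_inter_right U hdisj.subset_compl_left))
  simpa [hUZ.sdiff_eq_left] using hZU.isMeagre_diff

end BaireHull

section Souslin

lemma eq_of_forall_mem_closure_image_cylinder {α X : Type*} [TopologicalSpace α]
    [DiscreteTopology α] [TopologicalSpace X] [T3Space X] {g : (ℕ → α) → X} (hg : Continuous g)
    {y : ℕ → α} {x : X} (hx : ∀ n, x ∈ closure (g '' cylinder y n)) : x = g y := by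
  by_contra hne
  obtain ⟨t, ht, htc, htx⟩ :=
    exists_mem_nhds_isClosed_subset (isOpen_compl_singleton.mem_nhds (Ne.symm hne))
  obtain ⟨n, hn⟩ := exists_cylinder_subset (hg.continuousAt.preimage_mem_nhds ht)
  exact htx (closure_minimal (image_subset_iff.2 hn) htc (hx n)) rfl

variable {X : Type*} [TopologicalSpace X] [SecondCountableTopology X] [T3Space X]

lemma baireMeasurableSet_range {g : (ℕ → ℕ) → X} (hg : Continuous g) :
    BaireMeasurableSet (range g) := by
  set A : List ℕ → Set X := fun l => g '' {y | res y l.length = l}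
  set H : List ℕ → Set X := fun l => baireHull (A l)
  set W : List ℕ → Set X := fun l => H l \ ⋃ k, H (k :: l)
  have hA : ∀ l, A l ⊆ ⋃ k, A (k :: l) := by
    rintro l _ ⟨y, hy, rfl⟩
    exact mem_iUnion.2 ⟨y l.length, y, by simpa [res_succ] using hy, rfl⟩
  have hW : ∀ l, IsMeagre (W l) := fun l =>
    isMeagre_of_subset_baireHull
      ((baireMeasurableSet_baireHull _).diff (.iUnion fun _ => baireMeasurableSet_baireHull _))
      sdiff_subset
      (disjoint_left.2 fun x hx hxA => hx.2 (iUnion_mono (fun _ => subset_baireHull _) (hA l hxA)))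
  have hcover : H [] \ range g ⊆ ⋃ l, W l := by
    rintro x ⟨hxH, hxg⟩
    by_contra hxW
    simp only [mem_iUnion, not_exists] at hxW
    obtain ⟨y, hy⟩ := exists_forall_res (P := fun l => x ∈ H l) hxH fun l hl => by
      simpa using not_not.1 fun h => hxW l ⟨hl, h⟩
    refine hxg ⟨y, (eq_of_forall_mem_closure_image_cylinder hg fun n => ?_).symm⟩
    simpa [cylinder_eq_res, A] using baireHull_subset_closure _ (hy n)
  have hsub : range g ⊆ H [] := by simpa [H, A] using subset_baireHull (range g)
  rw [← sdiff_sdiff_cancel_left hsub]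
  exact (baireMeasurableSet_baireHull _).diff ((isMeagre_iUnion hW).mono hcover).baireMeasurableSet

theorem MeasureTheory.AnalyticSet.baireMeasurableSet {s : Set X} (hs : AnalyticSet s) :
    BaireMeasurableSet s := by
  rw [AnalyticSet] at hs
  rcases hs with rfl | ⟨g, hg, rfl⟩
  · exact isOpen_empty.baireMeasurableSet
  · exact baireMeasurableSet_range hg

end Souslin

section KuratowskiUlam

variable {β γ : Type*} [TopologicalSpace β] [TopologicalSpace γ] [SecondCountableTopology γ]

lemma IsClosed.eventually_isNowhereDense_section {F : Set (β × γ)} (hF : IsClosed F)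
    (hF' : IsNowhereDense F) : ∀ᶠ b in residual β, IsNowhereDense {y | (b, y) ∈ F} := by
  have hW : ∀ W ∈ countableBasis γ, ∀ᶠ b in residual β, W.Nonempty → ¬W ⊆ {y | (b, y) ∈ F} := by
    intro W hWB
    have hcl : IsClosed {b | W ⊆ {y | (b, y) ∈ F}} := by
      have : {b | W ⊆ {y | (b, y) ∈ F}} = ⋂ y ∈ W, (·, y) ⁻¹' F := by ext; simp [subset_def]
      exact this ▸ isClosed_biInter fun y _ => hF.preimage (Continuous.prodMk_left y)
    have hint : interior {b | W ⊆ {y | (b, y) ∈ F}} ×ˢ W ⊆ interior F :=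
      (isOpen_interior.prod ((isBasis_countableBasis γ).isOpen hWB)).subset_interior_iff.2
        fun p hp => interior_subset hp.1 hp.2
    rw [hF.isNowhereDense_iff.1 hF', subset_empty_iff, prod_eq_empty_iff] at hint
    rcases hint with hint | hint
    · exact mem_of_superset (hcl.isNowhereDense_iff.2 hint).isMeagre fun b hb _ => hb
    · exact .of_forall fun b hne => absurd hint hne.ne_empty
  filter_upwards [(eventually_countable_ball (countable_countableBasis γ)).2 hW] with b hb
  refine (IsClosed.isNowhereDense_iff (hF.preimage (Continuous.prodMk_right b) :
    IsClosed {y | (b, y) ∈ F})).2 (eq_empty_iff_forall_notMem.2 fun y hy => ?_)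
  obtain ⟨W, hWB, hyW, hWsub⟩ :=
    (isBasis_countableBasis γ).exists_subset_of_mem_open hy isOpen_interior
  exact hb W hWB ⟨y, hyW⟩ (hWsub.trans interior_subset)

lemma IsMeagre.eventually_isMeagre_section {s : Set (β × γ)} (hs : IsMeagre s) :
    ∀ᶠ b in residual β, IsMeagre {y | (b, y) ∈ s} := by
  obtain ⟨S, hS, hSc, hsS⟩ := isMeagre_iff_countable_union_isNowhereDense.1 hs
  have : Countable S := hSc.to_subtype
  filter_upwards [(eventually_countable_ball hSc).2 fun t ht =>
    isClosed_closure.eventually_isNowhereDense_section (hS t ht).closure] with b hb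
  refine (isMeagre_iUnion fun t : S => (hb t t.2).isMeagre).mono fun y hy => ?_
  obtain ⟨t, ht, hyt⟩ := hsS hy
  exact mem_iUnion.2 ⟨⟨t, ht⟩, subset_closure hyt⟩

variable [BaireSpace β] [BaireSpace γ]

/-- The Kuratowski–Ulam theorem. -/
theorem BaireMeasurableSet.isMeagre_of_eventually_isMeagre_section {s : Set (β × γ)}
    (hs : BaireMeasurableSet s) (h : ∀ᶠ b in residual β, IsMeagre {y | (b, y) ∈ s}) :
    IsMeagre s := by
  obtain ⟨U, hU, hsU⟩ := hs.residualEq_isOpen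
  suffices U = ∅ by simpa [this] using hsU.isMeagre_diff
  refine eq_empty_iff_forall_notMem.2 fun ⟨b₀, c₀⟩ hU₀ => ?_
  obtain ⟨V, W, hV, hW, hbV, hcW, hVW⟩ := isOpen_prod_iff.1 hU b₀ c₀ hU₀
  obtain ⟨b, ⟨hbs, hbU⟩, hbV⟩ := (dense_of_mem_residual
    (h.and hsU.symm.isMeagre_diff.eventually_isMeagre_section)).exists_mem_open hV ⟨b₀, hbV⟩
  refine not_isMeagre_of_isOpen hW ⟨c₀, hcW⟩ ((hbs.union hbU).mono fun y hy => ?_)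
  by_cases hys : (b, y) ∈ s
  exacts [Or.inl hys, Or.inr ⟨hVW ⟨hbV, hy⟩, hys⟩]

theorem isMeagre_graph [T1Space γ] [PerfectSpace γ] {g : β → γ}
    (hg : BaireMeasurableSet {p : β × γ | p.2 = g p.1}) : IsMeagre {p : β × γ | p.2 = g p.1} :=
  hg.isMeagre_of_eventually_isMeagre_section <| .of_forall fun b => by
    simpa using isMeagre_singleton (g b)

end KuratowskiUlam

section ProductBoxes

variable {X ι σ : Type*}

lemma Function.Injective.extend_mem_pi {τ : ι → σ} (hτ : Injective τ) {u : σ → Set X}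
    {I : Set σ} {q : ι → X} {w : σ → X} (hq : ∀ i, τ i ∈ I → q i ∈ u (τ i)) (hw : w ∈ I.pi u) :
    extend τ q w ∈ I.pi u := by
  intro s hs
  by_cases h : ∃ i, τ i = s
  · obtain ⟨i, rfl⟩ := h
    exact hτ.extend_apply q w i ▸ hq i hs
  · exact (extend_apply' q w s h).symm ▸ hw s hs

variable [TopologicalSpace X]

lemma Function.Injective.isOpenMap_comp_right {τ : ι → σ} (hτ : Injective τ) :
    IsOpenMap fun w : σ → X => w ∘ τ := by
  intro U hU
  refine isOpen_iff_mem_nhds.2 ?_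
  rintro _ ⟨w, hw, rfl⟩
  obtain ⟨I, u, hu, hIU⟩ := isOpen_pi_iff.1 hU w hw
  refine mem_of_superset (set_pi_mem_nhds (I.finite_toSet.preimage hτ.injOn)
    fun i hi => (hu _ hi).1.mem_nhds (hu _ hi).2) fun q hq => ?_
  exact ⟨extend τ q w, hIU (hτ.extend_mem_pi (fun i hi => hq i hi) fun s hs => (hu s hs).2),
    Function.extend_comp hτ q w⟩

/-- The bad configurations form a closed meagre subset of the Baire space `σ → X`, so the box
`∏ V s` contains a smaller box avoiding them. -/
lemma exists_subset_forall_injective_disjoint [IsCompletelyPseudoMetrizableSpace X] [Finite ι]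
    [Finite σ] {F : Set (ι → X)} (hFc : IsClosed F) (hFm : IsMeagre F) {V : σ → Set X}
    (hV : ∀ s, IsOpen (V s) ∧ (V s).Nonempty) :
    ∃ W : σ → Set X, (∀ s, IsOpen (W s) ∧ (W s).Nonempty ∧ W s ⊆ V s) ∧
      ∀ τ : ι → σ, Injective τ → Disjoint (univ.pi fun i => W (τ i)) F := by
  set G : Set (σ → X) := ⋃ (τ : ι → σ) (_ : Injective τ), (· ∘ τ) ⁻¹' F
  have hGm : IsMeagre G := isMeagre_iUnion fun τ => isMeagre_iUnion fun hτ =>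
    hFm.preimage_of_isOpenMap (by fun_prop) hτ.isOpenMap_comp_right
  have hGc : IsClosed G := isClosed_iUnion_of_finite fun τ => isClosed_iUnion_of_finite fun _ =>
    hFc.preimage (by fun_prop)
  have hVo : IsOpen (univ.pi V) := isOpen_set_pi finite_univ fun s _ => (hV s).1
  obtain ⟨w, hwV, hwG⟩ : (univ.pi V \ G).Nonempty := by
    refine sdiff_nonempty.2 fun h => not_isMeagre_of_isOpen hVo ?_ (hGm.mono h)
    exact univ_pi_nonempty_iff.2 fun s => (hV s).2
  obtain ⟨u, hu, hsub⟩ := isOpen_pi_iff'.1 (hVo.sdiff hGc) w ⟨hwV, hwG⟩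
  refine ⟨fun s => u s ∩ V s, fun s => ⟨(hu s).1.inter (hV s).1, ⟨w s, (hu s).2, hwV s trivial⟩,
    inter_subset_right⟩, fun τ hτ => disjoint_left.2 fun q hq hqF => ?_⟩
  have hext : extend τ q w ∈ univ.pi u :=
    hτ.extend_mem_pi (fun i _ => (hq i trivial).1) fun s _ => (hu s).2
  exact (hsub hext).2 (mem_iUnion₂.2 ⟨τ, hτ, by simpa [extend_comp hτ] using hqF⟩)

end ProductBoxes

section Mycielski

variable {X ι : Type*} [MetricSpace X] [PerfectSpace X]

lemma exists_disjoint_balls_subset {U : Set X} (hU : IsOpen U) (hne : U.Nonempty) {ε : ℝ}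
    (hε : 0 < ε) :
    ∃ V : Bool → Set X, (∀ b, IsOpen (V b) ∧ (V b).Nonempty ∧ closure (V b) ⊆ U ∧
      Metric.ediam (V b) ≤ ENNReal.ofReal ε) ∧ Disjoint (V true) (V false) := by
  obtain ⟨x, hx⟩ := hne
  obtain ⟨y, ⟨hyU, -⟩, hyx⟩ :=
    preperfect_iff_nhds.1 PerfectSpace.univ_preperfect x trivial U (hU.mem_nhds hx)
  obtain ⟨δx, hδx, hxU⟩ := Metric.isOpen_iff.1 hU x hx
  obtain ⟨δy, hδy, hyU'⟩ := Metric.isOpen_iff.1 hU y hyU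
  have hxy : 0 < dist x y := dist_pos.2 hyx.symm
  set r := min (min δx δy) (min (dist x y) ε)
  have hr : 0 < r := by positivity
  have hrx : r ≤ δx := by simp [r]
  have hry : r ≤ δy := by simp [r]
  have hrxy : r ≤ dist x y := by simp [r]
  have hrε : r ≤ ε := by simp [r]
  have hball : ∀ z δ, Metric.ball z δ ⊆ U → r ≤ δ → closure (Metric.ball z (r / 3)) ⊆ U :=
    fun z δ hzU hrδ => Metric.closure_ball_subset_closedBall.trans
      ((Metric.closedBall_subset_ball (by linarith)).trans hzU)
  refine ⟨fun b => Metric.ball (bif b then x else y) (r / 3), fun b => ⟨Metric.isOpen_ball,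
    ⟨_, Metric.mem_ball_self (by positivity)⟩, ?_,
    Metric.ediam_le_of_forall_dist_le fun a ha c hc => (dist_triangle_right a c _).trans
      (by linarith [Metric.mem_ball.1 ha, Metric.mem_ball.1 hc])⟩,
    Metric.ball_disjoint_ball (by simp only [cond_true, cond_false]; linarith)⟩
  cases b
  exacts [hball y δy hyU' hry, hball x δx hxU hrx]

variable [CompleteSpace X] [Finite ι]

lemma exists_mycielski_step {F : Set (ι → X)} (hFc : IsClosed F) (hFm : IsMeagre F) (l : ℕ)
    {ε : ℝ} (hε : 0 < ε) {A : List Bool → Set X} (hA : ∀ s, IsOpen (A s) ∧ (A s).Nonempty) :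
    ∃ B : List Bool → Set X, (∀ s, IsOpen (B s) ∧ (B s).Nonempty) ∧
      (∀ s b, closure (B (b :: s)) ⊆ A s ∧ Metric.ediam (B (b :: s)) ≤ ENNReal.ofReal ε) ∧
      (∀ s, Disjoint (B (true :: s)) (B (false :: s))) ∧
      ∀ τ : ι → List Bool, Injective τ → (∀ i, (τ i).length = l + 1) →
        Disjoint (univ.pi fun i => B (τ i)) F := by
  choose V hV hVdisj using fun s => exists_disjoint_balls_subset (hA s).1 (hA s).2 hε
  set B₀ : List Bool → Set X := fun t => V t.tail (t.headD true)
  let S := {t : List Bool // t.length = l + 1}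
  have : Finite S := (List.finite_length_eq Bool (l + 1)).to_subtype
  obtain ⟨W, hW, hWF⟩ := exists_subset_forall_injective_disjoint (σ := S) hFc hFm
    (V := fun t => B₀ t.1) fun t => ⟨(hV _ _).1, (hV _ _).2.1⟩
  set B : List Bool → Set X := fun t => if h : t.length = l + 1 then W ⟨t, h⟩ else B₀ t
  have hBB₀ : ∀ t, B t ⊆ B₀ t := fun t => by
    by_cases h : t.length = l + 1
    · simpa [B, h] using (hW ⟨t, h⟩).2.2
    · simp [B, h]
  refine ⟨B, fun t => ?_, fun s b => ⟨(closure_mono (hBB₀ _)).trans (hV s b).2.2.1,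
    (Metric.ediam_mono (hBB₀ _)).trans (hV s b).2.2.2⟩,
    fun s => (hVdisj s).mono (hBB₀ _) (hBB₀ _), fun τ hτ hτl => ?_⟩
  · by_cases h : t.length = l + 1
    · simpa [B, h] using ⟨(hW ⟨t, h⟩).1, (hW ⟨t, h⟩).2.1⟩
    · simpa [B, h] using ⟨(hV _ _).1, (hV _ _).2.1⟩
  · have : (fun i => B (τ i)) = fun i => W ⟨τ i, hτl i⟩ := funext fun i => dif_pos (hτl i)
    exact this ▸ hWF _ fun i j h => hτ (congrArg Subtype.val h)

lemma exists_mycielski_scheme [Nonempty X] {F : ℕ → Set (ι → X)}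
    (hF : ∀ n, IsClosed (F n) ∧ IsMeagre (F n)) :
    ∃ D : List Bool → Set X, (∀ s, (D s).Nonempty) ∧ CantorScheme.ClosureAntitone D ∧
      CantorScheme.VanishingDiam D ∧ CantorScheme.Disjoint D ∧
      ∀ l (τ : ι → List Bool), Injective τ → (∀ i, (τ i).length = l + 1) →
        Disjoint (univ.pi fun i => D (τ i)) (F l) := by
  choose! next hnext using
    fun l (A : List Bool → Set X) (hA : ∀ s, IsOpen (A s) ∧ (A s).Nonempty) =>
      exists_mycielski_step (hF l).1 (hF l).2 l (Nat.one_div_pos_of_nat (n := l)) hA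
  let level : ℕ → {A : List Bool → Set X // ∀ s, IsOpen (A s) ∧ (A s).Nonempty} := fun l =>
    l.rec ⟨fun _ => univ, fun _ => ⟨isOpen_univ, univ_nonempty⟩⟩
      fun l A => ⟨next l A, (hnext l A A.2).1⟩
  have hstep (l : ℕ) := hnext l (level l).1 (level l).2
  refine ⟨fun s => (level s.length).1 s, fun s => ((level s.length).2 s).2,
    fun s b => ((hstep s.length).2.1 s b).1, fun x => ?_, ?_, fun l τ hτ hτl => ?_⟩
  · refine (tendsto_add_atTop_iff_nat 1).1 (tendsto_of_tendsto_of_tendsto_of_le_of_le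
      (h := fun n : ℕ => ENNReal.ofReal (1 / ((n : ℝ) + 1))) tendsto_const_nhds ?_
      (fun _ => bot_le) fun n => ?_)
    · simpa using ENNReal.tendsto_ofReal (tendsto_one_div_add_atTop_nhds_zero_nat (𝕜 := ℝ))
    · simpa using ((hstep (res x n).length).2.1 (res x n) (x n)).2
  · rintro s (_ | _) (_ | _) h
    exacts [absurd rfl h, ((hstep s.length).2.2.1 s).symm, (hstep s.length).2.2.1 s, absurd rfl h]
  · have : (fun i => (level (τ i).length).1 (τ i)) = fun i => next l (level l).1 (τ i) :=
      funext fun i => by rw [hτl i]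
    exact this ▸ (hstep l).2.2.2 τ hτ hτl

end Mycielski

/-- Mycielski's theorem. -/
theorem exists_nat_bool_injection_forall_injective_notMem {X ι : Type*} [TopologicalSpace X]
    [IsCompletelyMetrizableSpace X] [PerfectSpace X] [Nonempty X] [Finite ι] {M : Set (ι → X)}
    (hM : IsMeagre M) : ∃ φ : (ℕ → Bool) → X, Continuous φ ∧ Injective φ ∧
      ∀ x : ι → ℕ → Bool, Injective x → φ ∘ x ∉ M := by
  let := upgradeIsCompletelyMetrizable X
  obtain ⟨F, hF, hFmono, hMF⟩ := hM.exists_monotone_isClosed_cover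
  obtain ⟨D, hne, hanti, hdiam, hdisj, hD⟩ := exists_mycielski_scheme hF
  have hdom := hanti.map_of_vanishingDiam hdiam hne
  refine ⟨fun x => (CantorScheme.inducedMap D).2 ⟨x, hdom ▸ mem_univ x⟩,
    hdiam.map_continuous.comp (by fun_prop), fun x y h => by simpa using hdisj.map_injective h,
    fun x hx hxM => ?_⟩
  obtain ⟨j, hj⟩ := mem_iUnion.1 (hMF hxM)
  obtain ⟨n, hn, hjn⟩ := (((tendsto_add_atTop_nat 1).eventually (eventually_injective_res hx)).and
    (eventually_ge_atTop j)).exists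
  exact disjoint_left.1 (hD n _ hn fun i => res_length _ _)
    (fun i _ => CantorScheme.map_mem ⟨x i, _⟩ (n + 1)) (hFmono hjn hj)

lemma perfect_range_of_continuous_injective {α β : Type*} [TopologicalSpace α] [CompactSpace α]
    [PerfectSpace α] [TopologicalSpace β] [T2Space β] {f : α → β} (hf : Continuous f)
    (hinj : Injective f) : Perfect (range f) := by
  refine ⟨(isCompact_range hf).isClosed, ?_⟩
  rintro _ ⟨x, rfl⟩
  simpa using (PerfectSpace.univ_preperfect x trivial).map hf.continuousAt hinj

lemma exists_injective_comp_eq {α ι : Type*} [Infinite α] [Fintype ι] (x : ι → α) {y : α}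
    (hy : y ∉ range x) : ∃ (w : ι → α) (σ : ι → ι), Injective w ∧ y ∉ range w ∧ x = w ∘ σ := by
  classical
  obtain ⟨t, hxt, ht⟩ := Infinite.exists_superset_card_eq (insert y (Finset.univ.image x))
    (Fintype.card ι + 1) ((Finset.card_insert_le _ _).trans
      (Nat.add_le_add_right (Finset.card_image_le.trans_eq Finset.card_univ) 1))
  have hT : Fintype.card ι = Fintype.card (t.erase y) := by
    simp [Finset.card_erase_of_mem (hxt (Finset.mem_insert_self _ _)), ht]
  let e := Fintype.equivOfCardEq hT
  refine ⟨fun i => (e i).1, fun i => e.symm ⟨x i, ?_⟩, Subtype.val_injective.comp e.injective,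
    fun ⟨i, hi⟩ => Finset.notMem_erase y t (by simpa [← hi] using (e i).2),
    funext fun i => by simp⟩
  exact Finset.mem_erase.2 ⟨fun h => hy ⟨i, h⟩, hxt (Finset.mem_insert_of_mem (by simp))⟩

theorem coanalytic_graph_has_perfect_free_subset_general
    (m : ℕ)
    (f : (Fin m → (ℕ → Bool)) → (ℕ → Bool))
    (hf : AnalyticSet
      ({p : (Fin m → (ℕ → Bool)) × (ℕ → Bool) | p.2 = f p.1}ᶜ)) :
    ∃ P : Set (ℕ → Bool), P.Nonempty ∧ Perfect P ∧
      ∀ a : Fin m → (ℕ → Bool), (∀ i, a i ∈ P) →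
        (∃ i, f a = a i) ∨ f a ∉ P := by
  have : PolishSpace ((Fin m → ℕ → Bool) × (ℕ → Bool)) := {}
  have hgraph (σ : Fin m → Fin m) :
      IsMeagre {p : (Fin m → ℕ → Bool) × (ℕ → Bool) | p.2 = f (p.1 ∘ σ)} :=
    isMeagre_graph (g := fun b => f (b ∘ σ)) (hf.preimage
      (f := fun p : (Fin m → ℕ → Bool) × (ℕ → Bool) => (p.1 ∘ σ, p.2))
      (by fun_prop)).baireMeasurableSet.of_compl
  let e : (Fin m ⊕ Unit → ℕ → Bool) ≃ₜ (Fin m → ℕ → Bool) × (ℕ → Bool) :=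
    Homeomorph.sumArrowHomeomorphProdArrow.trans
      ((Homeomorph.refl _).prodCongr (Homeomorph.funUnique Unit _))
  obtain ⟨φ, hφc, hφi, hφM⟩ := exists_nat_bool_injection_forall_injective_notMem
    ((isMeagre_iUnion hgraph).preimage_of_isOpenMap e.continuous e.isOpenMap)
  refine ⟨range φ, range_nonempty φ, perfect_range_of_continuous_injective hφc hφi, fun a ha => ?_⟩
  choose x hx using ha
  obtain rfl : a = φ ∘ x := funext fun i => (hx i).symm
  by_contra! ⟨hne, y, hy⟩
  obtain ⟨w, σ, hw, hyw, rfl⟩ := exists_injective_comp_eq x (y := y) fun ⟨i, hi⟩ =>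
    hne i (by rw [← hy, comp_apply, hi])
  refine hφM (Sum.elim w fun _ => y) (hw.sumElim (injective_of_subsingleton _)
    fun i _ h => hyw ⟨i, h⟩) (mem_iUnion.2 ⟨σ, ?_⟩)
  simpa [e, comp_assoc] using hy

/-- Every function `f : (2^ω)^m → 2^ω` (with `m ≥ 1`) whose graph is coanalytic has a
nonempty perfect free subset. -/
theorem coanalytic_graph_has_perfect_free_subset
    (m : ℕ) (hm : 1 ≤ m)
    (f : (Fin m → (ℕ → Bool)) → (ℕ → Bool))
    (hf : AnalyticSet
      ({p : (Fin m → (ℕ → Bool)) × (ℕ → Bool) | p.2 = f p.1}ᶜ)) :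
    ∃ P : Set (ℕ → Bool), P.Nonempty ∧ Perfect P ∧
      ∀ a : Fin m → (ℕ → Bool), (∀ i, a i ∈ P) →
        (∃ i, f a = a i) ∨ f a ∉ P :=
  coanalytic_graph_has_perfect_free_subset_general m f hf
end

section
/- Every Borel measurable function f : ω^ω → ω^ω has a superperfect free subset; that is, there is a superperfect tree T ⊆ ω^{<ω} such that for every x ∈ [T], either f(x) = x or f(x) ∉ [T]. -/
/-- `T ⊆ ω^{<ω}` is a tree: closed under initial segments. -/
def IsTreeN (T : Set (List ℕ)) : Prop :=
  ∀ σ ∈ T, ∀ τ : List ℕ, τ <+: σ → τ ∈ T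

/-- `T` is superperfect: a nonempty tree in which every node has an ω-splitting
extension. -/
def Superperfect (T : Set (List ℕ)) : Prop :=
  T.Nonempty ∧ IsTreeN T ∧
    ∀ σ ∈ T, ∃ τ ∈ T, σ <+: τ ∧ {n : ℕ | τ ++ [n] ∈ T}.Infinite

/-- The set of branches `[T]` of a tree `T ⊆ ω^{<ω}`. -/
def branches (T : Set (List ℕ)) : Set (ℕ → ℕ) :=
  {x : ℕ → ℕ | ∀ n : ℕ, (List.range n).map x ∈ T}

/-!
A Borel function `f` is continuous on a comeager set `D`, and a fusion argument (each level of
the tree is pushed into one more of the dense open sets whose intersection lies in `D`) yields a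
superperfect tree `S` with `[S] ⊆ D`. If `f` fixes every branch of `S`, then `[S]` is free.
Otherwise some branch `x₀` has `f x₀ ≠ x₀`; continuity on `D` gives a basic neighbourhood
`[x₀ ↾ n]` whose points in `D` are all mapped out of it, so the part of `S` through `x₀ ↾ n` is a
superperfect tree whose branches are mapped out of its own body.
-/

open Filter Topology Set PiNat

def initSeg (x : ℕ → ℕ) (n : ℕ) : List ℕ := (List.range n).map x

def cylinderOf (σ : List ℕ) : Set (ℕ → ℕ) := {y | initSeg y σ.length = σ}

lemma List.eq_of_prefix_of_length_eq {α : Type*} {l₁ l₂ l₃ : List α} (h₁ : l₁ <+: l₃)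
    (h₂ : l₂ <+: l₃) (h : l₁.length = l₂.length) : l₁ = l₂ :=
  (List.prefix_of_prefix_length_le h₁ h₂ h.le).eq_of_length h

@[simp] lemma length_initSeg (x : ℕ → ℕ) (n : ℕ) : (initSeg x n).length = n := by
  simp [initSeg]

lemma initSeg_succ (x : ℕ → ℕ) (n : ℕ) : initSeg x (n + 1) = initSeg x n ++ [x n] := by
  simp [initSeg, List.range_succ]

lemma initSeg_prefix_initSeg (x : ℕ → ℕ) {m n : ℕ} (h : m ≤ n) : initSeg x m <+: initSeg x n := by
  induction n, h using Nat.le_induction with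
  | base => exact List.prefix_refl _
  | succ n _ ih => exact ih.trans (initSeg_succ x n ▸ List.prefix_append _ _)

lemma initSeg_eq_initSeg_iff {x y : ℕ → ℕ} {n : ℕ} :
    initSeg y n = initSeg x n ↔ y ∈ cylinder x n := by
  simp [initSeg, List.map_inj_left, mem_cylinder_iff]

lemma initSeg_getD (σ : List ℕ) : initSeg (σ.getD · 0) σ.length = σ :=
  List.ext_getElem (by simp) fun i _ hi => by simp [initSeg, hi]

lemma cylinderOf_initSeg (x : ℕ → ℕ) (n : ℕ) : cylinderOf (initSeg x n) = cylinder x n := by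
  ext y
  simp [cylinderOf, initSeg_eq_initSeg_iff]

lemma isOpen_cylinderOf (σ : List ℕ) : IsOpen (cylinderOf σ) := by
  have h := cylinderOf_initSeg (σ.getD · 0) σ.length
  rw [initSeg_getD] at h
  exact h ▸ isOpen_cylinder _ _ _

lemma nonempty_cylinderOf (σ : List ℕ) : (cylinderOf σ).Nonempty :=
  ⟨_, initSeg_getD σ⟩

lemma hasBasis_nhds_cylinder (x : ℕ → ℕ) : (𝓝 x).HasBasis (fun _ => True) (cylinder x) := by
  refine ⟨fun U => ⟨fun hU => ?_, fun ⟨n, _, hn⟩ =>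
    mem_of_superset ((isOpen_cylinder _ x n).mem_nhds (self_mem_cylinder x n)) hn⟩⟩
  obtain ⟨_, ⟨y, n, rfl⟩, hx, hsub⟩ :=
    (isTopologicalBasis_cylinders (fun _ : ℕ => ℕ)).mem_nhds_iff.mp hU
  refine ⟨n, trivial, fun z hz => hsub fun i hi => ?_⟩
  rw [mem_cylinder_iff.mp hz i hi, mem_cylinder_iff.mp hx i hi]

lemma Dense.exists_prefix_cylinderOf_subset {U : Set (ℕ → ℕ)} (hd : Dense U) (hU : IsOpen U)
    (σ : List ℕ) : ∃ τ, σ <+: τ ∧ cylinderOf τ ⊆ U := by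
  obtain ⟨z, hzσ, hzU⟩ := hd.inter_open_nonempty _ (isOpen_cylinderOf σ) (nonempty_cylinderOf σ)
  obtain ⟨n, -, hn⟩ := (hasBasis_nhds_cylinder z).mem_iff.mp (hU.mem_nhds hzU)
  refine ⟨initSeg z (max n σ.length), ?_, ?_⟩
  · simpa only [show initSeg z σ.length = σ from hzσ] using
      initSeg_prefix_initSeg z (le_max_right n σ.length)
  · rw [cylinderOf_initSeg]
    exact (cylinder_anti z (le_max_left _ _)).trans hn

lemma branches_mono {S T : Set (List ℕ)} (h : S ⊆ T) : branches S ⊆ branches T :=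
  fun _ hx n => h (hx n)

section SubtreeThrough

def subtreeThrough (S : Set (List ℕ)) (p : List ℕ) : Set (List ℕ) :=
  {σ ∈ S | σ <+: p ∨ p <+: σ}

variable {S : Set (List ℕ)} {p : List ℕ}

lemma superperfect_subtreeThrough (hS : Superperfect S) (hp : p ∈ S) :
    Superperfect (subtreeThrough S p) := by
  obtain ⟨-, hTree, hSplit⟩ := hS
  refine ⟨⟨p, hp, .inl (List.prefix_refl p)⟩, ?_, ?_⟩
  · rintro σ ⟨hσ, hσp⟩ τ hτσ
    refine ⟨hTree σ hσ τ hτσ, ?_⟩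
    rcases hσp with h | h
    · exact .inl (hτσ.trans h)
    · rcases le_total τ.length p.length with hle | hle
      · exact .inl (List.prefix_of_prefix_length_le hτσ h hle)
      · exact .inr (List.prefix_of_prefix_length_le h hτσ hle)
  · rintro σ ⟨hσ, hσp⟩
    obtain ⟨ρ, hρ, hσρ, hpρ⟩ : ∃ ρ ∈ S, σ <+: ρ ∧ p <+: ρ :=
      hσp.elim (fun h => ⟨p, hp, h, List.prefix_refl p⟩) (fun h => ⟨σ, hσ, List.prefix_refl σ, h⟩)
    obtain ⟨τ, hτ, hρτ, hinf⟩ := hSplit ρ hρ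
    have hpτ := hpρ.trans hρτ
    exact ⟨τ, ⟨hτ, .inr hpτ⟩, hσρ.trans hρτ,
      hinf.mono fun n hn => ⟨hn, .inr (hpτ.trans (List.prefix_append _ _))⟩⟩

lemma branches_subtreeThrough_subset :
    branches (subtreeThrough S p) ⊆ branches S ∩ cylinderOf p := by
  intro x hx
  refine ⟨branches_mono (fun _ h => h.1) hx, ?_⟩
  rcases (hx p.length).2 with h | h
  · exact h.eq_of_length (by simp)
  · exact (h.eq_of_length (by simp)).symm

end SubtreeThrough

section Embedding

/- A map `e` with `e t ++ [m] <+: e (m :: t)` embeds `ω^{<ω}` into a tree, reading `t` from right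
to left: `m :: t` is the child `t⌢m` of `t`. -/
def embeddingTree (e : List ℕ → List ℕ) : Set (List ℕ) := {σ | ∃ t, σ <+: e t}

variable {e : List ℕ → List ℕ} (he : ∀ m t, e t ++ [m] <+: e (m :: t))
include he

lemma map_prefix_of_suffix {s t : List ℕ} (h : s <:+ t) : e s <+: e t := by
  induction t with
  | nil => rw [List.suffix_nil.mp h]
  | cons m t ih =>
    rcases List.suffix_cons_iff.mp h with rfl | h
    · exact List.prefix_refl _
    · exact (ih h).trans ((List.prefix_append _ _).trans (he m t))

lemma cons_suffix_of_append_prefix {c : ℕ} {t t₁ : List ℕ} (ht : t <:+ t₁)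
    (h : e t ++ [c] <+: e t₁) : c :: t <:+ t₁ := by
  obtain ⟨u, rfl⟩ := ht
  have hu : u ≠ [] := by
    rintro rfl
    simpa using h.length_le
  have hc : u.getLast hu :: t <:+ u ++ t :=
    ⟨u.dropLast, by rw [← List.singleton_append, ← List.append_assoc, List.dropLast_append_getLast]⟩
  have hpre := (he _ t).trans (map_prefix_of_suffix he hc)
  obtain rfl : c = u.getLast hu := by
    simpa using List.eq_of_prefix_of_length_eq h hpre (by simp)
  exact hc

lemma suffix_of_map_prefix {s t : List ℕ} (h : e s <+: e t) : s <:+ t := by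
  induction s with
  | nil => exact List.nil_suffix
  | cons c s ih =>
    have hc := (he c s).trans h
    exact cons_suffix_of_append_prefix he (ih ((List.prefix_append _ _).trans hc)) hc

lemma exists_length_eq_mem_cylinderOf_of_mem_branches {x : ℕ → ℕ}
    (hx : x ∈ branches (embeddingTree e)) (k : ℕ) :
    ∃ t : List ℕ, t.length = k ∧ x ∈ cylinderOf (e t) := by
  induction k with
  | zero =>
    obtain ⟨t₁, h₁⟩ := hx (e []).length
    exact ⟨[], rfl,
      List.eq_of_prefix_of_length_eq h₁ (map_prefix_of_suffix he List.nil_suffix) (by simp)⟩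
  | succ k ih =>
    obtain ⟨t, rfl, ht⟩ := ih
    obtain ⟨t₁, h₁⟩ := hx (e (x (e t).length :: t)).length
    have hc : e t ++ [x (e t).length] <+: e t₁ := by
      have hlt : (e t).length + 1 ≤ (e (x (e t).length :: t)).length := by
        simpa using (he (x (e t).length) t).length_le
      have hseg : initSeg x ((e t).length + 1) = e t ++ [x (e t).length] := by
        rw [initSeg_succ, show initSeg x (e t).length = e t from ht]
      exact hseg ▸ (initSeg_prefix_initSeg x hlt).trans h₁
    have hsuf := cons_suffix_of_append_prefix he
      (suffix_of_map_prefix he ((List.prefix_append _ _).trans hc)) hc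
    exact ⟨_ :: t, rfl,
      List.eq_of_prefix_of_length_eq h₁ (map_prefix_of_suffix he hsuf) (by simp)⟩

lemma superperfect_embeddingTree : Superperfect (embeddingTree e) :=
  ⟨⟨[], [], List.nil_prefix⟩, fun _ ⟨t, h⟩ _ hτ => ⟨t, hτ.trans h⟩,
    fun _ ⟨t, h⟩ => ⟨e t, ⟨t, List.prefix_refl _⟩, h,
      infinite_univ.mono fun m _ => ⟨m :: t, he m t⟩⟩⟩

end Embedding

def levelEmbedding (ext : ℕ → List ℕ → List ℕ) : List ℕ → List ℕ
  | [] => ext 0 []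
  | m :: t => ext (t.length + 1) (levelEmbedding ext t ++ [m])

theorem exists_superperfect_branches_subset_of_mem_residual {D : Set (ℕ → ℕ)}
    (hD : D ∈ residual (ℕ → ℕ)) : ∃ T, Superperfect T ∧ branches T ⊆ D := by
  obtain ⟨G, hGD, hG, hGdense⟩ := mem_residual.mp hD
  obtain ⟨W, hWopen, rfl⟩ := isGδ_iff_eq_iInter_nat.mp hG
  choose ext hext using fun n =>
    (hGdense.mono (iInter_subset W n)).exists_prefix_cylinderOf_subset (hWopen n)
  have he : ∀ m t, levelEmbedding ext t ++ [m] <+: levelEmbedding ext (m :: t) :=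
    fun _ _ => (hext _ _).1
  have hW : ∀ t, cylinderOf (levelEmbedding ext t) ⊆ W t.length := by
    rintro (_ | ⟨m, t⟩)
    exacts [(hext _ _).2, (hext _ _).2]
  refine ⟨embeddingTree (levelEmbedding ext), superperfect_embeddingTree he,
    fun x hx => hGD (mem_iInter.mpr fun n => ?_)⟩
  obtain ⟨t, rfl, hxt⟩ := exists_length_eq_mem_cylinderOf_of_mem_branches he hx n
  exact hW t hxt

theorem Measurable.exists_mem_residual_continuousOn {X Y : Type*} [TopologicalSpace X]
    [MeasurableSpace X] [BorelSpace X] [TopologicalSpace Y] [SecondCountableTopology Y]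
    [MeasurableSpace Y] [OpensMeasurableSpace Y] {f : X → Y} (hf : Measurable f) :
    ∃ D ∈ residual X, ContinuousOn f D := by
  obtain ⟨B, hBc, -, hB⟩ := TopologicalSpace.exists_countable_basis Y
  choose V hVopen hV using fun b (hb : b ∈ B) =>
    (hf (hB.isOpen hb).measurableSet).residualEq_isOpen
  refine ⟨⋂ b ∈ B, ⋂ hb : b ∈ B, {x | f x ∈ b ↔ x ∈ V b hb}, ?_, ?_⟩
  · exact (countable_bInter_mem hBc).mpr fun b hb =>
      countable_iInter_mem.mpr fun hb' => eventuallyEq_set.mp (hV b hb')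
  · refine hB.continuousOn_iff.mpr fun b hb => ⟨V b hb, hVopen b hb, ext fun x => ?_⟩
    simp only [mem_inter_iff, mem_preimage, mem_iInter]
    exact ⟨fun ⟨hfx, hx⟩ => ⟨(hx b hb hb).mp hfx, hx⟩,
      fun ⟨hxV, hx⟩ => ⟨(hx b hb hb).mpr hxV, hx⟩⟩

lemma ContinuousWithinAt.exists_mem_nhds_mapsTo_compl {X : Type*} [TopologicalSpace X]
    [T2Space X] {f : X → X} {D : Set X} {x₀ : X} (hf : ContinuousWithinAt f D x₀)
    (hne : f x₀ ≠ x₀) : ∃ U ∈ 𝓝 x₀, MapsTo f (U ∩ D) Uᶜ := by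
  obtain ⟨V, W, hV, hW, hVW⟩ := t2_separation_nhds hne.symm
  obtain ⟨U, hU, hUD⟩ := mem_nhdsWithin_iff_exists_mem_nhds_inter.mp (hf hW)
  exact ⟨U ∩ V, inter_mem hU hV, fun x ⟨⟨hxU, _⟩, hxD⟩ hfx =>
    hVW.ne_of_mem hfx.2 (hUD ⟨hxU, hxD⟩) rfl⟩

lemma Superperfect.exists_superperfect_image_notMem_branches {f : (ℕ → ℕ) → (ℕ → ℕ)}
    {D : Set (ℕ → ℕ)} (hf : ContinuousOn f D) {S : Set (List ℕ)} (hS : Superperfect S)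
    (hSD : branches S ⊆ D) {x₀ : ℕ → ℕ} (hx₀ : x₀ ∈ branches S) (hne : f x₀ ≠ x₀) :
    ∃ T, Superperfect T ∧ ∀ x ∈ branches T, f x ∉ branches T := by
  obtain ⟨U, hU, hfU⟩ := (hf x₀ (hSD hx₀)).exists_mem_nhds_mapsTo_compl hne
  obtain ⟨n, -, hn⟩ := (hasBasis_nhds_cylinder x₀).mem_iff.mp hU
  have hsub : branches (subtreeThrough S (initSeg x₀ n)) ⊆ branches S ∩ U := fun x hx =>
    have h := branches_subtreeThrough_subset hx
    ⟨h.1, hn (cylinderOf_initSeg x₀ n ▸ h.2)⟩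
  exact ⟨_, superperfect_subtreeThrough hS (hx₀ n),
    fun x hx hfx => hfU ⟨(hsub hx).2, hSD (hsub hx).1⟩ (hsub hfx).2⟩

/-- Every Borel measurable function `f : ω^ω → ω^ω` has a superperfect free subset. -/
theorem borel_function_has_superperfect_free_subset
    (f : (ℕ → ℕ) → (ℕ → ℕ)) (hf : Measurable f) :
    ∃ T : Set (List ℕ), Superperfect T ∧
      ∀ x ∈ branches T, f x = x ∨ f x ∉ branches T := by
  obtain ⟨D, hD, hfD⟩ := hf.exists_mem_residual_continuousOn
  obtain ⟨S, hS, hSD⟩ := exists_superperfect_branches_subset_of_mem_residual hD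
  by_cases hfix : ∀ x ∈ branches S, f x = x
  · exact ⟨S, hS, fun x hx => .inl (hfix x hx)⟩
  obtain ⟨x₀, hx₀, hne⟩ := not_forall₂.mp hfix
  obtain ⟨T, hT, hfree⟩ := hS.exists_superperfect_image_notMem_branches hfD hSD hx₀ hne
  exact ⟨T, hT, fun x hx => .inr (hfree x hx)⟩
end
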